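/- Let p be a prime with p ≡ 1 (mod 3), write p = 6k+1 with k ≥ 1, let K be a field of characteristic p, and let c ∈ K. Consider the homogeneous linear system in the unknowns β₀, …, β_k, δ₀, …, δ_{k-1} ∈ K (all fraction-coefficients interpreted in K; the denominators 2, 3, 4 and 6j+5 for 0 ≤ j ≤ k-1 are nonzero in K): (I) for all 0 ≤ j ≤ k-1: -((6j+1)/2)·βⱼ - (4(j+1)(2j+1)/(3(6j+5)))·β_{j+1} + c·δⱼ = 0; (II) for all 0 ≤ j ≤ k-2: (12(j+1)c/(6j+5))·β_{j+1} + (2(j+1)/3)·δ_{j+1} + (3(6j+3)/4)·δⱼ = 0; (II') c·β_k - 3·δ_{k-1} = 0. Then the solution space of this system is exactly one-dimensional over K. -/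

import Mathlib

/-- The system of linear equations (I), (II), (II') from the search for degree-`p` singular
vectors in `M_{1,c}(Stand)` when `p = 6k+1`, on unknowns `β₀,…,β_k, δ₀,…,δ_{k-1}`. -/
def IsSol (K : Type*) [Field K] (k : ℕ) (c : K) (β δ : ℕ → K) : Prop :=
  (∀ j : ℕ, j + 1 ≤ k →
    -(((6 * j + 1 : ℕ) : K) / 2) * β j
      - (((4 * (j + 1) * (2 * j + 1) : ℕ) : K) / ((3 * (6 * j + 5) : ℕ) : K)) * β (j + 1)
      + c * δ j = 0) ∧
  (∀ j : ℕ, j + 2 ≤ k →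
    (((12 * (j + 1) : ℕ) : K) * c / ((6 * j + 5 : ℕ) : K)) * β (j + 1)
      + (((2 * (j + 1) : ℕ) : K) / 3) * δ (j + 1)
      + (((3 * (6 * j + 3) : ℕ) : K) / 4) * δ j = 0) ∧
  c * β k - 3 * δ (k - 1) = 0

noncomputable def gAux (K : Type*) [Field K] (k : ℕ) (c : K) : ℕ → K × K
  | 0 => (1, c / 3)
  | i + 1 =>
    let m := k - 1 - i
    let prev := gAux K k c i
    let b := (2 / ((6 * m + 1 : ℕ) : K)) *
      (c * prev.2 - (((4 * (m + 1) * (2 * m + 1) : ℕ) : K) / ((3 * (6 * m + 5) : ℕ) : K)) * prev.1)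
    let d := -(4 / ((3 * (6 * (m - 1) + 3) : ℕ) : K)) *
      ((((12 * m : ℕ) : K) * c / ((6 * (m - 1) + 5 : ℕ) : K)) * b
        + (((2 * m : ℕ) : K) / 3) * prev.2)
    (b, d)

section
variable (K : Type*) [Field K] (k : ℕ) (c : K)

lemma gAux_sol (hk : 1 ≤ k)
    (hc : ∀ n : ℕ, 0 < n → n < 6 * k + 1 → ((n : ℕ) : K) ≠ 0) :
    IsSol K k c (fun j => (gAux K k c (k - j)).1) (fun j => (gAux K k c (k - 1 - j)).2) := by
  have h2 : (2 : K) ≠ 0 := by simpa using hc 2 (by omega) (by omega)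
  have h3 : (3 : K) ≠ 0 := by simpa using hc 3 (by omega) (by omega)
  have h4 : (4 : K) ≠ 0 := by simpa using hc 4 (by omega) (by omega)
  refine ⟨?_, ?_, ?_⟩
  · intro j hj
    have n1 : ((6 * j + 1 : ℕ) : K) ≠ 0 := hc _ (by omega) (by omega)
    have e1 : k - j = (k - 1 - j) + 1 := by omega
    have e3 : k - (j+1) = k - 1 - j := by omega
    simp only [e1, e3, gAux]
    have e2 : k - 1 - (k - 1 - j) = j := by omega
    simp only [e2]
    generalize (((4 * (j + 1) * (2 * j + 1) : ℕ) : K) / ((3 * (6 * j + 5) : ℕ) : K)) = A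
    generalize (gAux K k c (k - 1 - j)).1 = x
    generalize (gAux K k c (k - 1 - j)).2 = y
    set u := ((6 * j + 1 : ℕ) : K) with hu
    field_simp [n1]
    ring
  · intro j hj
    have n1 : ((3 * (6 * j + 3) : ℕ) : K) ≠ 0 := by
      push_cast
      refine mul_ne_zero (by simpa using h3) ?_
      have := hc (6*j+3) (by omega) (by omega)
      push_cast at this; exact this
    have n2 : ((6 * j + 5 : ℕ) : K) ≠ 0 := hc _ (by omega) (by omega)
    have e1 : k - 1 - j = (k - 2 - j) + 1 := by omega
    have e3 : k - (j+1) = (k - 2 - j) + 1 := by omega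
    have e4 : k - 1 - (j + 1) = k - 2 - j := by omega
    simp only [e1, e3, e4, gAux]
    have e2 : k - 1 - (k - 2 - j) = j + 1 := by omega
    simp only [e2, Nat.add_sub_cancel]
    generalize (2 / ((6 * (j+1) + 1 : ℕ) : K)) *
      (c * (gAux K k c (k - 2 - j)).2 -
        (((4 * ((j+1) + 1) * (2 * (j+1) + 1) : ℕ) : K) / ((3 * (6 * (j+1) + 5) : ℕ) : K)) *
          (gAux K k c (k - 2 - j)).1) = B
    generalize (gAux K k c (k - 2 - j)).2 = y
    set S := ((3 * (6 * j + 3) : ℕ) : K) with hS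
    set Qq := ((6 * j + 5 : ℕ) : K) with hQ
    set P := ((12 * (j + 1) : ℕ) : K) with hP
    set R := ((2 * (j + 1) : ℕ) : K) with hR
    field_simp [n1, n2]
    ring
  · have e1 : k - k = 0 := by omega
    have e2 : k - 1 - (k - 1) = 0 := by omega
    simp only [e1, e2, gAux]
    field_simp
    ring

lemma gAux_zero (hk : 1 ≤ k)
    (hc : ∀ n : ℕ, 0 < n → n < 6 * k + 1 → ((n : ℕ) : K) ≠ 0)
    (β δ : ℕ → K) (h : IsSol K k c β δ) (h0 : β k = 0) :
    (∀ j ≤ k, β j = 0) ∧ (∀ j : ℕ, j + 1 ≤ k → δ j = 0) := by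
  obtain ⟨hI, hII, hII'⟩ := h
  have h2 : (2 : K) ≠ 0 := by simpa using hc 2 (by omega) (by omega)
  have h3 : (3 : K) ≠ 0 := by simpa using hc 3 (by omega) (by omega)
  have h4 : (4 : K) ≠ 0 := by simpa using hc 4 (by omega) (by omega)
  have hδtop : δ (k - 1) = 0 := by
    rw [h0] at hII'
    have h' : (3:K) * δ (k-1) = 0 := by linear_combination -hII'
    rcases mul_eq_zero.mp h' with h'' | h''
    · exact absurd h'' h3
    · exact h''
  have Q : ∀ i, i ≤ k → β (k - i) = 0 ∧ (i + 1 ≤ k → δ (k - 1 - i) = 0) := by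
    intro i
    induction i with
    | zero => intro _; exact ⟨by simpa using h0, fun _ => by simpa using hδtop⟩
    | succ i ih =>
      intro hik
      obtain ⟨hb, hd⟩ := ih (by omega)
      set m := k - (i + 1) with hm
      have hb1 : β (m + 1) = 0 := by
        have e : m + 1 = k - i := by omega
        rw [e]; exact hb
      have hd1 : δ m = 0 := by
        have e : m = k - 1 - i := by omega
        rw [e]; exact hd (by omega)
      have hβm : β m = 0 := by
        have hI' := hI m (by omega)
        rw [hb1, hd1] at hI'
        have n1 : ((6 * m + 1 : ℕ) : K) ≠ 0 := hc _ (by omega) (by omega)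
        have hne : -(((6 * m + 1 : ℕ) : K) / 2) ≠ 0 := by
          simp only [neg_ne_zero]
          exact div_ne_zero n1 h2
        have h' : -(((6 * m + 1 : ℕ) : K) / 2) * β m = 0 := by linear_combination hI'
        rcases mul_eq_zero.mp h' with h'' | h''
        · exact absurd h'' hne
        · exact h''
      refine ⟨hβm, fun hik2 => ?_⟩
      have hm1 : 1 ≤ m := by omega
      have hII2 := hII (m - 1) (by omega)
      have em : m - 1 + 1 = m := by omega
      rw [em, hβm, hd1] at hII2
      have n1 : ((3 * (6 * (m - 1) + 3) : ℕ) : K) ≠ 0 := by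
        push_cast
        refine mul_ne_zero (by simpa using h3) ?_
        have := hc (6 * (m-1) + 3) (by omega) (by omega)
        push_cast at this ⊢
        exact this
      have hne : ((3 * (6 * (m - 1) + 3) : ℕ) : K) / 4 ≠ 0 := div_ne_zero n1 h4
      have h' : ((3 * (6 * (m - 1) + 3) : ℕ) : K) / 4 * δ (m - 1) = 0 := by
        linear_combination hII2
      have e5 : k - 1 - (i + 1) = m - 1 := by omega
      rw [e5]
      rcases mul_eq_zero.mp h' with h'' | h''
      · exact absurd h'' hne
      · exact h''
  constructor
  · intro j hj
    have := (Q (k - j) (by omega)).1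
    rwa [show k - (k - j) = j by omega] at this
  · intro j hj
    have := (Q (k - 1 - j) (by omega)).2 (by omega)
    rwa [show k - 1 - (k - 1 - j) = j by omega] at this

end

/-- For `p = 6k+1` prime (`k ≥ 1`) and a field `K` of characteristic `p`, the solution
space of the system (I), (II), (II') is exactly one-dimensional: there is a solution,
nonzero on the relevant range of indices, such that every solution is a scalar multiple
of it on that range. -/
theorem stmt_16 (p k : ℕ) (hk : 1 ≤ k) (hpk : p = 6 * k + 1) (hp : p.Prime)
    (K : Type*) [Field K] [CharP K p] (c : K) :
    ∃ β δ : ℕ → K, IsSol K k c β δ ∧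
      ¬ ((∀ j ≤ k, β j = 0) ∧ (∀ j : ℕ, j + 1 ≤ k → δ j = 0)) ∧
      ∀ β' δ' : ℕ → K, IsSol K k c β' δ' →
        ∃ l : K, (∀ j ≤ k, β' j = l * β j) ∧ (∀ j : ℕ, j + 1 ≤ k → δ' j = l * δ j) := by
  have hc : ∀ n : ℕ, 0 < n → n < 6 * k + 1 → ((n : ℕ) : K) ≠ 0 := by
    intro n h1 h2 h3
    rw [CharP.cast_eq_zero_iff K p] at h3
    exact absurd (Nat.le_of_dvd h1 h3) (by omega)
  refine ⟨fun j => (gAux K k c (k - j)).1, fun j => (gAux K k c (k - 1 - j)).2,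
    gAux_sol K k c hk hc, ?_, ?_⟩
  · intro ⟨hb, _⟩
    have := hb k le_rfl
    simp [gAux] at this
  · intro β' δ' h'
    have hsol := gAux_sol K k c hk hc
    have hdiff : IsSol K k c (fun j => β' j - β' k * (gAux K k c (k - j)).1)
        (fun j => δ' j - β' k * (gAux K k c (k - 1 - j)).2) := by
      obtain ⟨hI1, hII1, hIII1⟩ := h'
      obtain ⟨hI2, hII2, hIII2⟩ := hsol
      refine ⟨fun j hj => ?_, fun j hj => ?_, ?_⟩
      · linear_combination hI1 j hj - β' k * hI2 j hj
      · linear_combination hII1 j hj - β' k * hII2 j hj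
      · linear_combination hIII1 - β' k * hIII2
    have hz : (fun j => β' j - β' k * (gAux K k c (k - j)).1) k = 0 := by
      simp [gAux]
    have hQ := gAux_zero K k c hk hc _ _ hdiff hz
    refine ⟨β' k, fun j hj => ?_, fun j hj => ?_⟩
    · have := hQ.1 j hj
      linear_combination this
    · have := hQ.2 j hj
      linear_combination this
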